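/- Let 0 < U₁ ≤ U(x,ξ) ≤ U₂ on [ε, ħω_D]² with U continuous, and fix T ∈ [0, τ₂]. Then the operator A defined by (Au)(x) = ∫_ε^{ħω_D} U(x,ξ) (u(ξ)/√(ξ² + u(ξ)²)) tanh(√(ξ² + u(ξ)²)/(2T)) dξ maps the set V_T = {u ∈ C[ε, ħω_D] : Δ₁(T) ≤ u(x) ≤ Δ₂(T)} into itself. -/

import Mathlib

/-! Writing `K_T(ξ, s) = (s/√(ξ²+s²)) tanh(√(ξ²+s²)/(2T))`, the operator is
`(Au)(x) = ∫ U(x,ξ) K_T(ξ, u ξ) dξ`. The map `s ↦ K_T(ξ, s)` is nonnegative and monotone on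
`[0, ∞)`, being a product of two such maps, so `Δ₁ ≤ u ≤ Δ₂` and `U₁ ≤ U ≤ U₂` give
`∫ U₁ K_T(ξ, Δ₁) ≤ (Au)(x) ≤ ∫ U₂ K_T(ξ, Δ₂)`. The gap equations say exactly that these
two bounds equal `Δ₁` and `Δ₂` (trivially so when the gap vanishes). Continuity of `Au` is
continuity of a parameter integral with jointly continuous integrand. -/

open Real Set intervalIntegral

/-- The tanh factor tanh(r/(2T)), interpreted as 1 at T = 0. -/
noncomputable def tanhFac (T r : ℝ) : ℝ :=
  if T = 0 then 1 else Real.tanh (r / (2 * T))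

namespace Real

lemma continuous_tanh : Continuous tanh := by
  simp only [funext tanh_eq_sinh_div_cosh]
  exact continuous_sinh.div continuous_cosh fun x => (cosh_pos x).ne'

lemma tanh_nonneg {x : ℝ} (hx : 0 ≤ x) : 0 ≤ tanh x := by
  rw [tanh_eq_sinh_div_cosh]
  exact div_nonneg (sinh_nonneg_iff.mpr hx) (cosh_pos x).le

lemma monotone_tanh : Monotone tanh := by
  intro x y hxy
  rw [tanh_eq_sinh_div_cosh, tanh_eq_sinh_div_cosh, div_le_div_iff₀ (cosh_pos x) (cosh_pos y)]
  -- `sinh y cosh x - cosh y sinh x = sinh (y - x) ≥ 0`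
  have h := sinh_nonneg_iff.mpr (sub_nonneg.mpr hxy)
  rw [sinh_sub] at h
  linarith

end Real

lemma continuous_tanhFac (T : ℝ) : Continuous (tanhFac T) := by
  unfold tanhFac
  split_ifs
  · exact continuous_const
  · exact continuous_tanh.comp (continuous_id.div_const _)

lemma tanhFac_nonneg {T r : ℝ} (hT : 0 ≤ T) (hr : 0 ≤ r) : 0 ≤ tanhFac T r := by
  unfold tanhFac
  split_ifs
  · exact zero_le_one
  · exact tanh_nonneg (by positivity)

lemma monotone_tanhFac {T : ℝ} (hT : 0 ≤ T) : Monotone (tanhFac T) := by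
  intro a b hab
  unfold tanhFac
  split_ifs
  · exact le_rfl
  · exact monotone_tanh (div_le_div_of_nonneg_right hab (by positivity))

lemma monotoneOn_div_sqrt_sq_add_sq (ξ : ℝ) :
    MonotoneOn (fun s => s / √(ξ ^ 2 + s ^ 2)) (Ici 0) := by
  intro s₁ (hs₁ : 0 ≤ s₁) s₂ (hs₂ : 0 ≤ s₂) hs
  rcases hs₁.eq_or_lt with rfl | hs₁
  · simpa using div_nonneg hs₂ (sqrt_nonneg _)
  have hr₁ : 0 < √(ξ ^ 2 + s₁ ^ 2) := sqrt_pos.mpr (by positivity)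
  have hr₂ : 0 < √(ξ ^ 2 + s₂ ^ 2) := sqrt_pos.mpr (by nlinarith)
  have hmul : ∀ s r : ℝ, 0 ≤ s → s * √r = √(s ^ 2 * r) := fun s r hs => by
    rw [sqrt_mul (sq_nonneg _), sqrt_sq hs]
  dsimp only
  rw [div_le_div_iff₀ hr₁ hr₂, hmul _ _ hs₁.le, hmul _ _ hs₂]
  apply sqrt_le_sqrt
  have hsq : s₁ ^ 2 ≤ s₂ ^ 2 := pow_le_pow_left₀ hs₁.le hs 2
  nlinarith [mul_le_mul_of_nonneg_left hsq (sq_nonneg ξ)]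

noncomputable def gapKernel (T ξ s : ℝ) : ℝ :=
  s / √(ξ ^ 2 + s ^ 2) * tanhFac T √(ξ ^ 2 + s ^ 2)

lemma gapKernel_nonneg {T ξ s : ℝ} (hT : 0 ≤ T) (hs : 0 ≤ s) : 0 ≤ gapKernel T ξ s :=
  mul_nonneg (div_nonneg hs (sqrt_nonneg _)) (tanhFac_nonneg hT (sqrt_nonneg _))

lemma monotoneOn_gapKernel {T : ℝ} (hT : 0 ≤ T) (ξ : ℝ) :
    MonotoneOn (gapKernel T ξ) (Ici 0) :=
  (monotoneOn_div_sqrt_sq_add_sq ξ).mul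
    (fun _ _ _ _ h => monotone_tanhFac hT (sqrt_le_sqrt (by gcongr)))
    (fun _ hs => div_nonneg hs (sqrt_nonneg _)) (fun _ _ => tanhFac_nonneg hT (sqrt_nonneg _))

lemma ContinuousOn.gapKernel {X : Type*} [TopologicalSpace X] (T : ℝ) {f g : X → ℝ}
    {s : Set X} (hf : ContinuousOn f s) (hg : ContinuousOn g s) (hf0 : ∀ x ∈ s, f x ≠ 0) :
    ContinuousOn (fun x => gapKernel T (f x) (g x)) s := by
  have hr : ContinuousOn (fun x => √(f x ^ 2 + g x ^ 2)) s := (hf.pow 2 |>.add (hg.pow 2)).sqrt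
  refine (hg.div hr fun x hx => ?_).mul ((continuous_tanhFac T).comp_continuousOn hr)
  exact (sqrt_pos.mpr (by have := hf0 x hx; positivity)).ne'

lemma integral_mul_gapKernel_eq_self {T V Δ a b : ℝ}
    (h : (1 = V * ∫ ξ in a..b, 1 / √(ξ ^ 2 + Δ ^ 2) * tanhFac T √(ξ ^ 2 + Δ ^ 2)) ∨ Δ = 0) :
    ∫ ξ in a..b, V * gapKernel T ξ Δ = Δ := by
  rcases h with h | rfl
  · calc ∫ ξ in a..b, V * gapKernel T ξ Δ
        = Δ * (V * ∫ ξ in a..b, 1 / √(ξ ^ 2 + Δ ^ 2) * tanhFac T √(ξ ^ 2 + Δ ^ 2)) := by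
          rw [← integral_const_mul, ← integral_const_mul]
          congr 1 with ξ
          rw [gapKernel]
          ring
      _ = Δ := by rw [← h, mul_one]
  · simp [gapKernel]

section IccIntegrals

variable {a b T : ℝ}

lemma intervalIntegrable_mul_gapKernel (ha : 0 < a) (hab : a ≤ b) {V s : ℝ → ℝ}
    (hV : ContinuousOn V (Icc a b)) (hs : ContinuousOn s (Icc a b)) :
    IntervalIntegrable (fun ξ => V ξ * gapKernel T ξ (s ξ)) MeasureTheory.volume a b := by
  refine ContinuousOn.intervalIntegrable ?_
  rw [uIcc_of_le hab]
  exact hV.mul (continuousOn_id.gapKernel T hs fun ξ hξ => (ha.trans_le hξ.1).ne')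

lemma integral_mul_gapKernel_mono (ha : 0 < a) (hab : a ≤ b) (hT : 0 ≤ T) {V W s t : ℝ → ℝ}
    (hV : ContinuousOn V (Icc a b)) (hW : ContinuousOn W (Icc a b))
    (hs : ContinuousOn s (Icc a b)) (ht : ContinuousOn t (Icc a b))
    (hV0 : ∀ ξ ∈ Icc a b, 0 ≤ V ξ) (hVW : ∀ ξ ∈ Icc a b, V ξ ≤ W ξ)
    (hs0 : ∀ ξ ∈ Icc a b, 0 ≤ s ξ) (hst : ∀ ξ ∈ Icc a b, s ξ ≤ t ξ) :
    ∫ ξ in a..b, V ξ * gapKernel T ξ (s ξ) ≤ ∫ ξ in a..b, W ξ * gapKernel T ξ (t ξ) := by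
  refine integral_mono_on hab (intervalIntegrable_mul_gapKernel ha hab hV hs)
    (intervalIntegrable_mul_gapKernel ha hab hW ht) fun ξ hξ => ?_
  have hs0 := hs0 ξ hξ
  exact mul_le_mul (hVW ξ hξ)
    (monotoneOn_gapKernel hT ξ hs0 (hs0.trans (hst ξ hξ)) (hst ξ hξ))
    (gapKernel_nonneg hT hs0) ((hV0 ξ hξ).trans (hVW ξ hξ))

end IccIntegrals

lemma continuousOn_intervalIntegral_of_continuousOn_prod {X : Type*} [MetricSpace X]
    {K : Set X} (hK : IsClosed K) {a b : ℝ} {f : X → ℝ → ℝ}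
    (hf : ContinuousOn (Function.uncurry f) (K ×ˢ uIcc a b)) :
    ContinuousOn (fun x => ∫ t in a..b, f x t) K := by
  -- Tietze: extend the integrand continuously to all of `X × ℝ`.
  obtain ⟨F, hF⟩ := ContinuousMap.exists_restrict_eq (hK.prod isClosed_Icc) ⟨_, hf.domRestrict⟩
  have hFf : ∀ p ∈ K ×ˢ uIcc a b, F p = f p.1 p.2 := fun p hp =>
    DFunLike.congr_fun hF ⟨p, hp⟩
  have hFint : Continuous fun x => ∫ t in a..b, F (x, t) :=
    continuous_parametric_intervalIntegral_of_continuous' (μ := MeasureTheory.volume)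
      (f := fun x t => F (x, t)) F.continuous a b
  exact hFint.continuousOn.congr fun x hx =>
    integral_congr fun t ht => (hFf (x, t) ⟨hx, ht⟩).symm

theorem stmt12_general (U₁ U₂ ε ω τ₁ τ₂ : ℝ) (hε : 0 < ε) (hεω : ε < ω)
    (hU₁ : 0 < U₁)
    (U : ℝ → ℝ → ℝ)
    (hUcont : ContinuousOn (fun p : ℝ × ℝ => U p.1 p.2) (Set.Icc ε ω ×ˢ Set.Icc ε ω))
    (hUbd : ∀ x ∈ Set.Icc ε ω, ∀ ξ ∈ Set.Icc ε ω, U₁ ≤ U x ξ ∧ U x ξ ≤ U₂)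
    (T Δ₁ Δ₂ : ℝ) (hT : 0 ≤ T)
    (hΔ₁nonneg : 0 ≤ Δ₁)
    (hΔ₁eq : T < τ₁ →
      1 = U₁ * ∫ ξ in ε..ω,
        (1 / Real.sqrt (ξ ^ 2 + Δ₁ ^ 2)) * tanhFac T (Real.sqrt (ξ ^ 2 + Δ₁ ^ 2)))
    (hΔ₁zero : τ₁ ≤ T → Δ₁ = 0)
    (hΔ₂eq : T < τ₂ →
      1 = U₂ * ∫ ξ in ε..ω,
        (1 / Real.sqrt (ξ ^ 2 + Δ₂ ^ 2)) * tanhFac T (Real.sqrt (ξ ^ 2 + Δ₂ ^ 2)))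
    (hΔ₂zero : τ₂ ≤ T → Δ₂ = 0)
    (u : ℝ → ℝ) (hu : ContinuousOn u (Set.Icc ε ω))
    (hubd : ∀ x ∈ Set.Icc ε ω, Δ₁ ≤ u x ∧ u x ≤ Δ₂) :
    ContinuousOn
      (fun x => ∫ ξ in ε..ω,
        U x ξ * (u ξ / Real.sqrt (ξ ^ 2 + u ξ ^ 2)) *
          tanhFac T (Real.sqrt (ξ ^ 2 + u ξ ^ 2)))
      (Set.Icc ε ω) ∧
    ∀ x ∈ Set.Icc ε ω,
      Δ₁ ≤ (∫ ξ in ε..ω,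
          U x ξ * (u ξ / Real.sqrt (ξ ^ 2 + u ξ ^ 2)) *
            tanhFac T (Real.sqrt (ξ ^ 2 + u ξ ^ 2))) ∧
      (∫ ξ in ε..ω,
          U x ξ * (u ξ / Real.sqrt (ξ ^ 2 + u ξ ^ 2)) *
            tanhFac T (Real.sqrt (ξ ^ 2 + u ξ ^ 2))) ≤ Δ₂ := by
  have hkernel : ∀ ξ s, s / √(ξ ^ 2 + s ^ 2) * tanhFac T √(ξ ^ 2 + s ^ 2) = gapKernel T ξ s :=
    fun _ _ => rfl
  simp only [mul_assoc, hkernel]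
  have hfix₁ : ∫ ξ in ε..ω, U₁ * gapKernel T ξ Δ₁ = Δ₁ :=
    integral_mul_gapKernel_eq_self ((lt_or_ge T τ₁).imp hΔ₁eq hΔ₁zero)
  have hfix₂ : ∫ ξ in ε..ω, U₂ * gapKernel T ξ Δ₂ = Δ₂ :=
    integral_mul_gapKernel_eq_self ((lt_or_ge T τ₂).imp hΔ₂eq hΔ₂zero)
  refine ⟨continuousOn_intervalIntegral_of_continuousOn_prod isClosed_Icc ?_, fun x hx => ?_⟩
  · have hu₂ : ContinuousOn (fun p : ℝ × ℝ => u p.2) (Icc ε ω ×ˢ Icc ε ω) :=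
      hu.comp continuous_snd.continuousOn fun p hp => hp.2
    rw [uIcc_of_le hεω.le]
    exact hUcont.mul
      (continuous_snd.continuousOn.gapKernel T hu₂ fun p hp => (hε.trans_le hp.2.1).ne')
  · have hUx : ContinuousOn (U x) (Icc ε ω) :=
      hUcont.comp (continuous_const.prodMk continuous_id).continuousOn fun ξ hξ => ⟨hx, hξ⟩
    constructor
    · rw [← hfix₁]
      exact integral_mul_gapKernel_mono hε hεω.le hT continuousOn_const hUx continuousOn_const hu
        (fun _ _ => hU₁.le) (fun ξ hξ => (hUbd x hx ξ hξ).1) (fun _ _ => hΔ₁nonneg)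
        (fun ξ hξ => (hubd ξ hξ).1)
    · rw [← hfix₂]
      exact integral_mul_gapKernel_mono hε hεω.le hT hUx continuousOn_const hu continuousOn_const
        (fun ξ hξ => hU₁.le.trans (hUbd x hx ξ hξ).1) (fun ξ hξ => (hUbd x hx ξ hξ).2)
        (fun ξ hξ => hΔ₁nonneg.trans (hubd ξ hξ).1) (fun ξ hξ => (hubd ξ hξ).2)

/-- The operator A maps V_T = {u ∈ C[ε, ħω_D] : Δ₁(T) ≤ u ≤ Δ₂(T)} into itself. -/
theorem stmt12 (U₁ U₂ ε ω τ₁ τ₂ : ℝ) (hε : 0 < ε) (hεω : ε < ω)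
    (hU₁ : 0 < U₁) (hU₁₂ : U₁ < U₂)
    (U : ℝ → ℝ → ℝ)
    (hUcont : ContinuousOn (fun p : ℝ × ℝ => U p.1 p.2) (Set.Icc ε ω ×ˢ Set.Icc ε ω))
    (hUbd : ∀ x ∈ Set.Icc ε ω, ∀ ξ ∈ Set.Icc ε ω, U₁ ≤ U x ξ ∧ U x ξ ≤ U₂)
    (hτ₁pos : 0 < τ₁) (hτ₂pos : 0 < τ₂)
    (hτ₁ : 1 = U₁ * ∫ ξ in ε..ω, (1 / ξ) * Real.tanh (ξ / (2 * τ₁)))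
    (hτ₂ : 1 = U₂ * ∫ ξ in ε..ω, (1 / ξ) * Real.tanh (ξ / (2 * τ₂)))
    (T Δ₁ Δ₂ : ℝ) (hT : 0 ≤ T) (hTτ₂ : T ≤ τ₂)
    (hΔ₁nonneg : 0 ≤ Δ₁) (hΔ₂nonneg : 0 ≤ Δ₂)
    (hΔ₁eq : T < τ₁ →
      1 = U₁ * ∫ ξ in ε..ω,
        (1 / Real.sqrt (ξ ^ 2 + Δ₁ ^ 2)) * tanhFac T (Real.sqrt (ξ ^ 2 + Δ₁ ^ 2)))
    (hΔ₁zero : τ₁ ≤ T → Δ₁ = 0)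
    (hΔ₂eq : T < τ₂ →
      1 = U₂ * ∫ ξ in ε..ω,
        (1 / Real.sqrt (ξ ^ 2 + Δ₂ ^ 2)) * tanhFac T (Real.sqrt (ξ ^ 2 + Δ₂ ^ 2)))
    (hΔ₂zero : τ₂ ≤ T → Δ₂ = 0)
    (u : ℝ → ℝ) (hu : ContinuousOn u (Set.Icc ε ω))
    (hubd : ∀ x ∈ Set.Icc ε ω, Δ₁ ≤ u x ∧ u x ≤ Δ₂) :
    ContinuousOn
      (fun x => ∫ ξ in ε..ω,
        U x ξ * (u ξ / Real.sqrt (ξ ^ 2 + u ξ ^ 2)) *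
          tanhFac T (Real.sqrt (ξ ^ 2 + u ξ ^ 2)))
      (Set.Icc ε ω) ∧
    ∀ x ∈ Set.Icc ε ω,
      Δ₁ ≤ (∫ ξ in ε..ω,
          U x ξ * (u ξ / Real.sqrt (ξ ^ 2 + u ξ ^ 2)) *
            tanhFac T (Real.sqrt (ξ ^ 2 + u ξ ^ 2))) ∧
      (∫ ξ in ε..ω,
          U x ξ * (u ξ / Real.sqrt (ξ ^ 2 + u ξ ^ 2)) *
            tanhFac T (Real.sqrt (ξ ^ 2 + u ξ ^ 2))) ≤ Δ₂ :=
  stmt12_general U₁ U₂ ε ω τ₁ τ₂ hε hεω hU₁ U hUcont hUbd T Δ₁ Δ₂ hT hΔ₁nonneg hΔ₁eq hΔ₁zero hΔ₂eq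
    hΔ₂zero u hu hubd
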